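/- arXiv:1607.04435 — 2 statements merged into one kernel-verified Lean document; each statement's English description precedes it below -/
import Mathlib

section
/- In ℚ[[z,w,u]] the trivariate generating function R(z,w,u) satisfies (1−z)·z^{2s}w^s·R(z,w,u)² − [(1−z)²(1−z²w+z^{2s}w^s) + z^{2s}w^s(1−uz^m)]·R(z,w,u) + (1−z)(1 − z²w + z^{2s}w^s) = 0; equivalently, R(z,w,u) satisfies the quadratic z^{2s}w^sR² − [(1−z)(1−z²w+z^{2s}w^s) + z^{2s}w^sT_m(z,u)]R + (1−z²w+z^{2s}w^s) = 0 with T_m(z,u) = (1 − uz^m)/(1 − z). -/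
open scoped Classical

/-- `x` is an endpoint of some pair in `P`. -/
def Paired (P : Finset (ℕ × ℕ)) (x : ℕ) : Prop := ∃ p ∈ P, p.1 = x ∨ p.2 = x

/-- Conditions (i)–(iii): `P` is a set of pairs `(i,j)`, `1 ≤ i < j ≤ n`, each index in at
most one pair, noncrossing, and every hairpin loop has at least `m` unpaired bases. -/
def SecBase (m n : ℕ) (P : Finset (ℕ × ℕ)) : Prop :=
  (∀ p ∈ P, 1 ≤ p.1 ∧ p.1 < p.2 ∧ p.2 ≤ n) ∧
  (∀ p ∈ P, ∀ q ∈ P, p ≠ q → p.1 ≠ q.1 ∧ p.1 ≠ q.2 ∧ p.2 ≠ q.1 ∧ p.2 ≠ q.2) ∧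
  (∀ p ∈ P, ∀ q ∈ P, ¬(p.1 < q.1 ∧ q.1 < p.2 ∧ p.2 < q.2)) ∧
  (∀ p ∈ P, (∀ x, p.1 < x → x < p.2 → ¬Paired P x) → m ≤ p.2 - p.1 - 1)

/-- Condition (iv): every maximal stack of `P` has length at least `s`. -/
def StackCond (s : ℕ) (P : Finset (ℕ × ℕ)) : Prop :=
  ∀ p ∈ P, (p.1 - 1, p.2 + 1) ∉ P → ∃ t, s ≤ t ∧ ∀ a < t, (p.1 + a, p.2 - a) ∈ P

/-- `P` is a secondary structure of length `n` with minimum stem size `s` and minimum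
hairpin size `m`. -/
def IsSecStruct (s m n : ℕ) (P : Finset (ℕ × ℕ)) : Prop :=
  SecBase m n P ∧ StackCond s P

/-- The (finite) set of all secondary structures of length `n`. -/
noncomputable def secFinset (s m n : ℕ) : Finset (Finset (ℕ × ℕ)) :=
  (Finset.range (n + 1) ×ˢ Finset.range (n + 1)).powerset.filter (IsSecStruct s m n)

/-- `r n`: the number of secondary structures of length `n`. -/
noncomputable def secCount (s m n : ℕ) : ℕ := (secFinset s m n).card

/-- A hairpin of `P`: a pair with no paired index strictly inside it. -/
def IsHairpin (P : Finset (ℕ × ℕ)) (p : ℕ × ℕ) : Prop :=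
  p ∈ P ∧ ∀ x, p.1 < x → x < p.2 → ¬Paired P x

/-- Number of hairpins of `P`. -/
noncomputable def numHairpins (P : Finset (ℕ × ℕ)) : ℕ :=
  (P.filter (IsHairpin P)).card

/-- `r_{n,l,k}`: number of secondary structures of length `n` with exactly `l` pairs
and exactly `k` hairpins. -/
noncomputable def secCount3 (s m n l k : ℕ) : ℕ :=
  ((secFinset s m n).filter (fun P => P.card = l ∧ numHairpins P = k)).card

/-- Trivariate generating function `R(z,w,u) = ∑ r_{n,l,k} z^n w^l u^k` in `ℚ[[z,w,u]]`. -/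
noncomputable def Rgf3 (s m : ℕ) : MvPowerSeries (Fin 3) ℚ :=
  fun d => (secCount3 s m (d 0) (d 1) (d 2) : ℚ)

/-!
Split a structure of length `n` at its last index. Either `n` is unpaired, or it is paired with
some `i` and the structure is a structure on `[1, i - 1]` followed by a *closed* structure on
`[i, n]`, i.e. one containing the pair `(i, n)`. With `D` the series of closed structures this
gives `R = 1 + z R + D R`.

A closed structure is its maximal outer stem of `t ≥ s` pairs `(1, n), (2, n - 1), …` around an
inner structure `Q` of length `b = n - 2t` that does not contain `(1, b)`; an empty `Q` leaves a
hairpin loop, which needs length at least `m`. Removing the outermost pair when `t > s`, and the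
whole stem when `t = s`, gives `(1 - z²w) D = z^{2s} w^s (R - D - 1/(1 - z) + u z^m/(1 - z))`.
Eliminating `D` between the two equations gives the quadratic.
-/
namespace SecStruct

open Finset

variable {s m n a b c t x lo hi : ℕ} {p q : ℕ × ℕ} {P Q A B : Finset (ℕ × ℕ)}

def shiftEmb (c : ℕ) : ℕ × ℕ ↪ ℕ × ℕ where
  toFun p := (p.1 + c, p.2 + c)
  inj' p q h := by
    simp only [Prod.mk.injEq, add_left_inj] at h
    exact Prod.ext h.1 h.2

@[simp] lemma shiftEmb_apply : shiftEmb c p = (p.1 + c, p.2 + c) := rfl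

def shift (c : ℕ) (Q : Finset (ℕ × ℕ)) : Finset (ℕ × ℕ) := Q.map (shiftEmb c)

lemma mem_shift : p ∈ shift c Q ↔ ∃ q ∈ Q, (q.1 + c, q.2 + c) = p := by
  simp only [shift, mem_map]
  rfl

@[simp] lemma mk_add_mem_shift {x y : ℕ} : (x + c, y + c) ∈ shift c Q ↔ (x, y) ∈ Q := by
  simp [mem_shift]

lemma shift_mem_shift (hq : q ∈ Q) : (q.1 + c, q.2 + c) ∈ shift c Q := mem_shift.2 ⟨q, hq, rfl⟩

lemma mem_shift_iff_le : p ∈ shift c Q ↔ c ≤ p.1 ∧ c ≤ p.2 ∧ (p.1 - c, p.2 - c) ∈ Q := by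
  rw [mem_shift]
  constructor
  · rintro ⟨q, hq, rfl⟩
    simpa using hq
  · rintro ⟨h1, h2, hq⟩
    exact ⟨_, hq, Prod.ext (by dsimp only; omega) (by dsimp only; omega)⟩

lemma card_shift : #(shift c Q) = #Q := card_map _

lemma shift_injective : Function.Injective (shift c) := map_injective _

lemma shift_union : shift c (A ∪ B) = shift c A ∪ shift c B := map_union _ _

lemma shift_shift : shift a (shift b Q) = shift (b + a) Q := by
  ext p
  simp only [mem_shift]
  constructor
  · rintro ⟨_, ⟨q, hq, rfl⟩, rfl⟩
    exact ⟨q, hq, by simp [add_assoc]⟩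
  · rintro ⟨q, hq, rfl⟩
    exact ⟨_, ⟨q, hq, rfl⟩, by simp [add_assoc]⟩

lemma paired_shift : Paired (shift c Q) x ↔ ∃ y, Paired Q y ∧ y + c = x := by
  constructor
  · rintro ⟨_, hp, h⟩
    obtain ⟨q, hq, rfl⟩ := mem_shift.1 hp
    rcases h with h | h
    · exact ⟨q.1, ⟨q, hq, Or.inl rfl⟩, h⟩
    · exact ⟨q.2, ⟨q, hq, Or.inr rfl⟩, h⟩
  · rintro ⟨y, ⟨q, hq, h⟩, rfl⟩
    refine ⟨_, mem_shift.2 ⟨q, hq, rfl⟩, ?_⟩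
    rcases h with rfl | rfl
    · exact Or.inl rfl
    · exact Or.inr rfl

lemma paired_union : Paired (A ∪ B) x ↔ Paired A x ∨ Paired B x := by
  simp only [Paired, mem_union, or_and_right, exists_or]

def InBlock (lo hi : ℕ) (P : Finset (ℕ × ℕ)) : Prop :=
  ∀ p ∈ P, lo < p.1 ∧ p.1 < p.2 ∧ p.2 ≤ hi

lemma InBlock.mono (h : InBlock lo hi P) {lo' hi' : ℕ} (hlo : lo' ≤ lo) (hhi : hi ≤ hi') :
    InBlock lo' hi' P := fun p hp => by have := h p hp; omega

lemma InBlock.union (hA : InBlock lo hi A) (hB : InBlock lo hi B) : InBlock lo hi (A ∪ B) := by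
  intro p hp
  rcases mem_union.1 hp with hp | hp
  exacts [hA p hp, hB p hp]

lemma InBlock.shift (h : InBlock 0 b Q) (c : ℕ) : InBlock c (c + b) (shift c Q) := by
  intro p hp
  obtain ⟨q, hq, rfl⟩ := mem_shift.1 hp
  have := h q hq
  dsimp only
  omega

lemma InBlock.paired (h : InBlock lo hi P) (hx : Paired P x) : lo < x ∧ x ≤ hi := by
  obtain ⟨p, hp, hx⟩ := hx
  have := h p hp
  omega

lemma InBlock.eq_empty_of_le (h : InBlock lo hi P) (hle : hi ≤ lo) : P = ∅ :=
  eq_empty_of_forall_notMem fun p hp => by have := h p hp; omega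

lemma exists_eq_shift (h : InBlock c (c + b) P) : ∃ Q, InBlock 0 b Q ∧ P = shift c Q := by
  refine ⟨P.image fun p => (p.1 - c, p.2 - c), ?_, ?_⟩
  · intro q hq
    obtain ⟨p, hp, rfl⟩ := mem_image.1 hq
    have := h p hp
    dsimp only
    omega
  · ext p
    rw [mem_shift]
    constructor
    · intro hp
      have := h p hp
      exact ⟨_, mem_image_of_mem _ hp, Prod.ext (by dsimp only; omega) (by dsimp only; omega)⟩
    · rintro ⟨_, hq, rfl⟩
      obtain ⟨p, hp, rfl⟩ := mem_image.1 hq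
      have := h p hp
      convert hp using 1
      exact Prod.ext (by dsimp only; omega) (by dsimp only; omega)

def EndsDistinct (P : Finset (ℕ × ℕ)) : Prop :=
  ∀ p ∈ P, ∀ q ∈ P, p ≠ q → p.1 ≠ q.1 ∧ p.1 ≠ q.2 ∧ p.2 ≠ q.1 ∧ p.2 ≠ q.2

def Noncrossing (P : Finset (ℕ × ℕ)) : Prop :=
  ∀ p ∈ P, ∀ q ∈ P, ¬(p.1 < q.1 ∧ q.1 < p.2 ∧ p.2 < q.2)

noncomputable def hairpins (P : Finset (ℕ × ℕ)) : Finset (ℕ × ℕ) := P.filter (IsHairpin P)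

def HairpinsAtLeast (m : ℕ) (P : Finset (ℕ × ℕ)) : Prop := ∀ p ∈ hairpins P, m ≤ p.2 - p.1 - 1

/-- Conditions (ii)–(iv), which unlike (i) are invariant under translation. -/
def Admissible (s m : ℕ) (P : Finset (ℕ × ℕ)) : Prop :=
  EndsDistinct P ∧ Noncrossing P ∧ HairpinsAtLeast m P ∧ StackCond s P

lemma isSecStruct_iff : IsSecStruct s m n P ↔ InBlock 0 n P ∧ Admissible s m P := by
  simp only [IsSecStruct, SecBase, Admissible, HairpinsAtLeast, hairpins, mem_filter, IsHairpin]
  exact ⟨fun ⟨⟨h1, h2, h3, h4⟩, h5⟩ => ⟨h1, h2, h3, fun p hp => h4 p hp.1 hp.2.2, h5⟩,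
    fun ⟨h1, h2, h3, h4, h5⟩ => ⟨⟨h1, h2, h3, fun p hp h => h4 p ⟨hp, hp, h⟩⟩, h5⟩⟩

lemma _root_.IsSecStruct.inBlock (h : IsSecStruct s m n P) : InBlock 0 n P :=
  (isSecStruct_iff.1 h).1

lemma _root_.IsSecStruct.endsDistinct (h : IsSecStruct s m n P) : EndsDistinct P := h.1.2.1

lemma isSecStruct_empty : IsSecStruct s m n ∅ := by
  simp [isSecStruct_iff, InBlock, Admissible, EndsDistinct, Noncrossing, HairpinsAtLeast, hairpins,
    StackCond]

lemma isSecStruct_succ_iff :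
    IsSecStruct s m (n + 1) P ∧ ¬Paired P (n + 1) ↔ IsSecStruct s m n P := by
  simp only [isSecStruct_iff]
  constructor
  · rintro ⟨⟨hP, hadm⟩, hn⟩
    refine ⟨fun p hp => ?_, hadm⟩
    have := hP p hp
    have : p.2 ≠ n + 1 := fun h => hn ⟨p, hp, Or.inr h⟩
    omega
  · rintro ⟨hP, hadm⟩
    exact ⟨⟨hP.mono le_rfl (Nat.le_succ n), hadm⟩, fun h => by have := hP.paired h; omega⟩

lemma numHairpins_eq_card_hairpins : numHairpins P = #(hairpins P) := rfl

def Apart (A B : Finset (ℕ × ℕ)) : Prop :=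
  ∀ p ∈ A, ∀ q ∈ B, p.1 < q.1 ∧ q.1 < q.2 ∧ (p.2 < q.1 ∨ q.2 < p.2)

lemma Apart.disjoint (h : Apart A B) : Disjoint A B :=
  disjoint_left.2 fun p hA hB => by have := h p hA p hB; omega

lemma endsDistinct_union (h : Apart A B) :
    EndsDistinct (A ∪ B) ↔ EndsDistinct A ∧ EndsDistinct B := by
  refine ⟨fun hu => ⟨fun p hp q hq => hu p (mem_union_left _ hp) q (mem_union_left _ hq),
    fun p hp q hq => hu p (mem_union_right _ hp) q (mem_union_right _ hq)⟩, ?_⟩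
  rintro ⟨hA, hB⟩ p hp q hq hne
  rcases mem_union.1 hp with hp | hp <;> rcases mem_union.1 hq with hq | hq
  · exact hA p hp q hq hne
  · have := h p hp q hq; omega
  · have := h q hq p hp; omega
  · exact hB p hp q hq hne

lemma noncrossing_union (h : Apart A B) :
    Noncrossing (A ∪ B) ↔ Noncrossing A ∧ Noncrossing B := by
  refine ⟨fun hu => ⟨fun p hp q hq => hu p (mem_union_left _ hp) q (mem_union_left _ hq),
    fun p hp q hq => hu p (mem_union_right _ hp) q (mem_union_right _ hq)⟩, ?_⟩
  rintro ⟨hA, hB⟩ p hp q hq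
  rcases mem_union.1 hp with hp | hp <;> rcases mem_union.1 hq with hq | hq
  · exact hA p hp q hq
  · have := h p hp q hq; omega
  · have := h q hq p hp; omega
  · exact hB p hp q hq

lemma endsDistinct_shift : EndsDistinct (shift c Q) ↔ EndsDistinct Q := by
  constructor
  · intro h p hp q hq hne
    have := h _ (shift_mem_shift hp) _ (shift_mem_shift hq)
      (fun he => hne (Prod.ext (by simpa using congrArg Prod.fst he)
        (by simpa using congrArg Prod.snd he)))
    omega
  · intro h _ hp _ hq hne
    obtain ⟨p, hp', rfl⟩ := mem_shift.1 hp
    obtain ⟨q, hq', rfl⟩ := mem_shift.1 hq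
    have := h p hp' q hq' (fun he => hne (by rw [he]))
    dsimp only
    omega

lemma noncrossing_shift : Noncrossing (shift c Q) ↔ Noncrossing Q := by
  constructor
  · intro h p hp q hq
    have := h _ (shift_mem_shift hp) _ (shift_mem_shift hq)
    dsimp only at this
    omega
  · intro h _ hp _ hq
    obtain ⟨p, hp', rfl⟩ := mem_shift.1 hp
    obtain ⟨q, hq', rfl⟩ := mem_shift.1 hq
    have := h p hp' q hq'
    dsimp only
    omega

lemma isHairpin_shift {x y : ℕ} : IsHairpin (shift c Q) (x + c, y + c) ↔ IsHairpin Q (x, y) := by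
  simp only [IsHairpin, mk_add_mem_shift, paired_shift, and_congr_right_iff]
  intro _
  constructor
  · intro h z hz1 hz2 hz
    exact h (z + c) (by omega) (by omega) ⟨z, hz, rfl⟩
  · rintro h _ hz1 hz2 ⟨z, hz, rfl⟩
    exact h z (by omega) (by omega) hz

lemma hairpins_shift : hairpins (shift c Q) = shift c (hairpins Q) := by
  rw [hairpins, hairpins, shift, filter_map]
  congr 1
  exact filter_congr fun q _ => isHairpin_shift (x := q.1) (y := q.2)

lemma hairpinsAtLeast_shift : HairpinsAtLeast m (shift c Q) ↔ HairpinsAtLeast m Q := by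
  rw [HairpinsAtLeast, HairpinsAtLeast, hairpins_shift, shift, forall_mem_map]
  exact forall₂_congr fun q _ => by rw [shiftEmb_apply, Nat.add_sub_add_right]

lemma isHairpin_union_left (hp : p ∈ A) (hB : ∀ x, p.1 < x → x < p.2 → ¬Paired B x) :
    IsHairpin (A ∪ B) p ↔ IsHairpin A p := by
  simp only [IsHairpin, paired_union, not_or, mem_union, hp, true_or, true_and]
  exact forall₃_congr fun x h1 h2 => and_iff_left (hB x h1 h2)

lemma isHairpin_union_right (h : Apart A B) (hq : q ∈ B) :
    IsHairpin (A ∪ B) q ↔ IsHairpin B q := by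
  rw [union_comm]
  refine isHairpin_union_left hq fun x h1 h2 ⟨p, hp, hx⟩ => ?_
  have := h p hp q hq
  omega

lemma hairpins_union (h : Apart A B) :
    hairpins (A ∪ B) = A.filter (IsHairpin (A ∪ B)) ∪ hairpins B := by
  rw [hairpins, filter_union, hairpins]
  congr 1
  exact filter_congr fun q hq => isHairpin_union_right h hq

lemma StackCond.union (hA : StackCond s A) (hB : StackCond s B) : StackCond s (A ∪ B) := by
  intro p hp htop
  rcases mem_union.1 hp with hp | hp
  · obtain ⟨t, ht, hrun⟩ := hA p hp fun h => htop (mem_union_left _ h)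
    exact ⟨t, ht, fun a ha => mem_union_left _ (hrun a ha)⟩
  · obtain ⟨t, ht, hrun⟩ := hB p hp fun h => htop (mem_union_right _ h)
    exact ⟨t, ht, fun a ha => mem_union_right _ (hrun a ha)⟩

def StacksOn (p q : ℕ × ℕ) : Prop := q.1 = p.1 + 1 ∧ q.2 + 1 = p.2

lemma StackCond.of_union_left (hA : InBlock 0 n A) (hB : InBlock 0 n B)
    (hAB : ∀ p ∈ A, ∀ q ∈ B, ¬StacksOn p q ∧ ¬StacksOn q p) (h : StackCond s (A ∪ B)) :
    StackCond s A := by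
  intro p hp htop
  have hpb := hA p hp
  obtain ⟨t, ht, hrun⟩ := h p (mem_union_left _ hp) fun hB' => by
    rcases mem_union.1 hB' with h' | h'
    · exact htop h'
    · exact (hAB p hp _ h').2 ⟨by dsimp only; omega, rfl⟩
  refine ⟨t, ht, fun a ha => ?_⟩
  induction a with
  | zero => simpa using hp
  | succ a ih =>
    have hprev := ih (by omega)
    rcases mem_union.1 (hrun (a + 1) ha) with h' | h'
    · exact h'
    · have := hB _ h'
      exact absurd ⟨rfl, by dsimp only at this ⊢; omega⟩ (hAB _ hprev _ h').1

lemma stackCond_shift (hQ : InBlock 0 b Q) : StackCond s (shift c Q) ↔ StackCond s Q := by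
  constructor
  · intro h q hq htop
    have hqb := hQ q hq
    obtain ⟨t, ht, hrun⟩ := h _ (mk_add_mem_shift.2 hq) fun h' => htop <| by
      obtain ⟨_, _, h'⟩ := mem_shift_iff_le.1 h'
      convert h' using 2 <;> dsimp only <;> omega
    refine ⟨t, ht, fun a ha => ?_⟩
    obtain ⟨_, h2, h'⟩ := mem_shift_iff_le.1 (hrun a ha)
    dsimp only at h2 h'
    have := hQ _ h'
    dsimp only at this
    convert h' using 2 <;> omega
  · intro h p hp htop
    obtain ⟨q, hq, rfl⟩ := mem_shift.1 hp
    have hqb := hQ q hq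
    obtain ⟨t, ht, hrun⟩ := h q hq fun h' => htop <| by
      convert mk_add_mem_shift.2 h' using 2 <;> dsimp only <;> omega
    refine ⟨t, ht, fun a ha => ?_⟩
    have := hQ _ (hrun a ha)
    dsimp only at this
    convert mk_add_mem_shift.2 (hrun a ha) using 2 <;> dsimp only <;> omega

section Concat

variable {A' Q' : Finset (ℕ × ℕ)}

lemma apart_union_shift (hA : InBlock 0 a A) (hQ : InBlock 0 b Q) : Apart A (shift a Q) := by
  intro p hp q hq
  have := hA p hp
  have := hQ.shift a q hq
  omega

lemma hairpins_union_shift (hA : InBlock 0 a A) (hQ : InBlock 0 b Q) :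
    hairpins (A ∪ shift a Q) = hairpins A ∪ hairpins (shift a Q) := by
  rw [hairpins_union (apart_union_shift hA hQ), hairpins]
  congr 1
  refine filter_congr fun p hp => isHairpin_union_left hp fun x _ hx hpx => ?_
  have := (hQ.shift a).paired hpx
  have := hA p hp
  omega

lemma disjoint_shift (hA : InBlock 0 a A) (hQ : InBlock 0 b Q) : Disjoint A (shift a Q) :=
  (apart_union_shift hA hQ).disjoint

lemma card_union_shift (hA : InBlock 0 a A) (hQ : InBlock 0 b Q) :
    #(A ∪ shift a Q) = #A + #Q := by
  rw [card_union_of_disjoint (disjoint_shift hA hQ), card_shift]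

lemma numHairpins_union_shift (hA : InBlock 0 a A) (hQ : InBlock 0 b Q) :
    numHairpins (A ∪ shift a Q) = numHairpins A + numHairpins Q := by
  have hdisj : Disjoint (hairpins A) (hairpins (shift a Q)) :=
    (disjoint_shift hA hQ).mono (filter_subset _ _) (filter_subset _ _)
  rw [numHairpins_eq_card_hairpins, hairpins_union_shift hA hQ, card_union_of_disjoint hdisj,
    hairpins_shift, card_shift]
  rfl

lemma admissible_union_shift (hA : InBlock 0 a A) (hQ : InBlock 0 b Q) :
    Admissible s m (A ∪ shift a Q) ↔ Admissible s m A ∧ Admissible s m Q := by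
  have hApart := apart_union_shift hA hQ
  have hA' : InBlock 0 (a + b) A := hA.mono le_rfl (Nat.le_add_right a b)
  have hB' : InBlock 0 (a + b) (shift a Q) := (hQ.shift a).mono (Nat.zero_le a) le_rfl
  have hHair : HairpinsAtLeast m (A ∪ shift a Q) ↔ HairpinsAtLeast m A ∧ HairpinsAtLeast m Q := by
    rw [HairpinsAtLeast, hairpins_union_shift hA hQ]
    exact forall_mem_union.trans (and_congr Iff.rfl hairpinsAtLeast_shift)
  have hStack : StackCond s (A ∪ shift a Q) ↔ StackCond s A ∧ StackCond s Q := by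
    have hAB : ∀ p ∈ A, ∀ q ∈ shift a Q, ¬StacksOn p q ∧ ¬StacksOn q p := by
      intro p hp q hq
      have := hA p hp
      have := hQ.shift a q hq
      simp only [StacksOn]
      omega
    rw [← stackCond_shift hQ (c := a)]
    refine ⟨fun h => ⟨StackCond.of_union_left hA' hB' hAB h, ?_⟩,
      fun h => StackCond.union h.1 h.2⟩
    rw [union_comm] at h
    exact StackCond.of_union_left hB' hA' (fun q hq p hp => (hAB p hp q hq).symm) h
  rw [Admissible, Admissible, Admissible, endsDistinct_union hApart, noncrossing_union hApart,
    endsDistinct_shift, noncrossing_shift, hHair, hStack]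
  tauto

lemma isSecStruct_union_shift (hA : InBlock 0 a A) (hQ : InBlock 0 b Q) :
    IsSecStruct s m (a + b) (A ∪ shift a Q) ↔ IsSecStruct s m a A ∧ IsSecStruct s m b Q := by
  have hblock : InBlock 0 (a + b) (A ∪ shift a Q) :=
    (hA.mono le_rfl (Nat.le_add_right a b)).union ((hQ.shift a).mono (Nat.zero_le a) le_rfl)
  simp only [isSecStruct_iff, hA, hQ, hblock, admissible_union_shift hA hQ, true_and]

lemma union_shift_inj (hA : InBlock 0 a A) (hA' : InBlock 0 a A') (hQ : InBlock 0 b Q)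
    (hQ' : InBlock 0 b Q') (h : A ∪ shift a Q = A' ∪ shift a Q') : A = A' ∧ Q = Q' := by
  have hleft : ∀ {A Q}, InBlock 0 a A → InBlock 0 b Q → (A ∪ shift a Q).filter (·.2 ≤ a) = A := by
    intro A Q hA hQ
    rw [filter_union, filter_true_of_mem fun p hp => (hA p hp).2.2,
      filter_false_of_mem fun p hp => by have := hQ.shift a p hp; omega, union_empty]
  have hright : ∀ {A Q}, InBlock 0 a A → InBlock 0 b Q →
      (A ∪ shift a Q).filter (a < ·.1) = shift a Q := by
    intro A Q hA hQ
    rw [filter_union, filter_false_of_mem fun p hp => by have := hA p hp; omega,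
      filter_true_of_mem fun p hp => (hQ.shift a p hp).1, empty_union]
  exact ⟨by rw [← hleft hA hQ, h, hleft hA' hQ'],
    shift_injective (by rw [← hright hA hQ, h, hright hA' hQ'])⟩

lemma exists_eq_union_shift (h : IsSecStruct s m (a + b) P) (hP : (a + 1, a + b) ∈ P) :
    ∃ A Q, InBlock 0 a A ∧ InBlock 0 b Q ∧ P = A ∪ shift a Q := by
  obtain ⟨hblock, hdist, hcross, -⟩ := isSecStruct_iff.1 h
  have hsplit : ∀ p ∈ P, p.2 ≤ a ∨ a < p.1 := by
    intro p hp
    by_cases he : p = (a + 1, a + b)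
    · subst he; right; dsimp only; omega
    have := hdist p hp _ hP he
    have := hcross p hp _ hP
    have := hblock p hp
    dsimp only at *
    omega
  obtain ⟨Q, hQ, hQeq⟩ := exists_eq_shift (P := P.filter (a < ·.1)) (c := a) (b := b)
    fun p hp => by have := hblock p (mem_filter.1 hp).1; have := (mem_filter.1 hp).2; omega
  refine ⟨P.filter (·.2 ≤ a), Q, fun p hp => ?_, hQ, ?_⟩
  · have := hblock p (mem_filter.1 hp).1; have := (mem_filter.1 hp).2; omega
  · rw [← hQeq, ← filter_or, filter_true_of_mem hsplit]

end Concat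

section Nest

def stem (t n : ℕ) : Finset (ℕ × ℕ) := (range t).image fun a => (1 + a, n - a)

def nest (t b : ℕ) (Q : Finset (ℕ × ℕ)) : Finset (ℕ × ℕ) := stem t (b + 2 * t) ∪ shift t Q

lemma mem_stem : p ∈ stem t n ↔ ∃ a < t, (1 + a, n - a) = p := by
  simp [stem]

lemma mk_mem_stem {a : ℕ} (ha : a < t) : (1 + a, n - a) ∈ stem t n := mem_stem.2 ⟨a, ha, rfl⟩

lemma card_stem : #(stem t n) = t := by
  rw [stem, card_image_of_injective _ fun a a' h => by simpa using congrArg Prod.fst h, card_range]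

lemma inBlock_stem (h : 2 * t ≤ n) : InBlock 0 n (stem t n) := by
  intro p hp
  obtain ⟨a, ha, rfl⟩ := mem_stem.1 hp
  dsimp only
  omega

lemma endsDistinct_stem (h : 2 * t ≤ n) : EndsDistinct (stem t n) := by
  intro p hp q hq hne
  obtain ⟨a, ha, rfl⟩ := mem_stem.1 hp
  obtain ⟨a', ha', rfl⟩ := mem_stem.1 hq
  have : a ≠ a' := fun h => hne (by rw [h])
  dsimp only
  omega

lemma noncrossing_stem (h : 2 * t ≤ n) : Noncrossing (stem t n) := by
  intro p hp q hq
  obtain ⟨a, ha, rfl⟩ := mem_stem.1 hp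
  obtain ⟨a', ha', rfl⟩ := mem_stem.1 hq
  dsimp only
  omega

lemma stackCond_stem (hst : s ≤ t) (h : 2 * t ≤ n) : StackCond s (stem t n) := by
  intro p hp htop
  obtain ⟨a, ha, rfl⟩ := mem_stem.1 hp
  obtain rfl : a = 0 := by
    by_contra ha0
    refine htop (mem_stem.2 ⟨a - 1, by omega, ?_⟩)
    exact Prod.ext (by dsimp only; omega) (by dsimp only; omega)
  exact ⟨t, hst, fun a' ha' => by simpa using mk_mem_stem (n := n) ha'⟩

section

variable (hQ : InBlock 0 b Q)
include hQ

lemma apart_stem_shift : Apart (stem t (b + 2 * t)) (shift t Q) := by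
  intro p hp q hq
  obtain ⟨a, ha, rfl⟩ := mem_stem.1 hp
  have := hQ.shift t q hq
  dsimp only
  omega

lemma inBlock_nest : InBlock 0 (b + 2 * t) (nest t b Q) :=
  (inBlock_stem (by omega)).union ((hQ.shift t).mono (Nat.zero_le t) (by omega))

lemma card_nest : #(nest t b Q) = t + #Q := by
  rw [nest, card_union_of_disjoint (apart_stem_shift hQ).disjoint, card_stem, card_shift]

lemma nest_inj {Q' : Finset (ℕ × ℕ)} (hQ' : InBlock 0 b Q') (h : nest t b Q = nest t b Q') :
    Q = Q' := by
  apply shift_injective (c := t)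
  rw [← union_sdiff_cancel_left (apart_stem_shift hQ).disjoint,
    ← union_sdiff_cancel_left (apart_stem_shift hQ').disjoint]
  exact congrArg (· \ stem t (b + 2 * t)) h

lemma filter_isHairpin_stem (ht : 0 < t) :
    (stem t (b + 2 * t)).filter (IsHairpin (nest t b Q)) =
      if Q = ∅ then {(t, t + b + 1)} else ∅ := by
  ext p
  simp only [mem_filter, mem_stem]
  constructor
  · rintro ⟨⟨a, ha, rfl⟩, -, hhp⟩
    by_cases hlast : a + 1 < t
    · exact absurd ⟨_, mem_union_left _ (mk_mem_stem hlast), Or.inl rfl⟩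
        (hhp (1 + (a + 1)) (by dsimp only; omega) (by dsimp only; omega))
    obtain rfl | ⟨q, hq⟩ := Q.eq_empty_or_nonempty
    · simp only [if_true, mem_singleton]
      exact Prod.ext (by dsimp only; omega) (by dsimp only; omega)
    · have := hQ q hq
      exact absurd ⟨_, mem_union_right _ (shift_mem_shift hq), Or.inl rfl⟩
        (hhp (q.1 + t) (by dsimp only; omega) (by dsimp only; omega))
  · split_ifs with hQe
    · rw [mem_singleton]
      rintro rfl
      have hmem : (t, t + b + 1) ∈ stem t (b + 2 * t) :=
        mem_stem.2 ⟨t - 1, by omega, Prod.ext (by dsimp only; omega) (by dsimp only; omega)⟩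
      refine ⟨mem_stem.1 hmem, mem_union_left _ hmem, fun x hx1 hx2 ⟨p, hp, hx⟩ => ?_⟩
      rw [nest, hQe, shift, map_empty, union_empty] at hp
      obtain ⟨a, ha, rfl⟩ := mem_stem.1 hp
      dsimp only at hx1 hx2 hx
      omega
    · simp

lemma hairpins_nest (ht : 0 < t) :
    hairpins (nest t b Q) = (if Q = ∅ then {(t, t + b + 1)} else ∅) ∪ hairpins (shift t Q) := by
  rw [nest, hairpins_union (apart_stem_shift hQ), ← nest, filter_isHairpin_stem hQ ht]

lemma numHairpins_nest (ht : 0 < t) :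
    numHairpins (nest t b Q) = if Q = ∅ then 1 else numHairpins Q := by
  rw [numHairpins_eq_card_hairpins, hairpins_nest hQ ht]
  split_ifs with hQe
  · simp [hQe, hairpins, shift]
  · rw [empty_union, hairpins_shift, card_shift]
    rfl

lemma hairpinsAtLeast_nest (ht : 0 < t) :
    HairpinsAtLeast m (nest t b Q) ↔ (Q = ∅ → m ≤ b) ∧ HairpinsAtLeast m Q := by
  rw [HairpinsAtLeast, hairpins_nest hQ ht, forall_mem_union, ← HairpinsAtLeast,
    hairpinsAtLeast_shift]
  split_ifs with hQe <;> simp [hQe, show t + b + 1 - t - 1 = b by omega]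

lemma admissible_nest (ht : 0 < t) (hst : s ≤ t) (h1b : (1, b) ∉ Q) :
    Admissible s m (nest t b Q) ↔ Admissible s m Q ∧ (Q = ∅ → m ≤ b) := by
  have hApart := apart_stem_shift (t := t) hQ
  have hStem : InBlock 0 (b + 2 * t) (stem t (b + 2 * t)) := inBlock_stem (by omega)
  have hB : InBlock 0 (b + 2 * t) (shift t Q) := (hQ.shift t).mono (Nat.zero_le t) (by omega)
  have hAB : ∀ q ∈ shift t Q, ∀ p ∈ stem t (b + 2 * t), ¬StacksOn q p ∧ ¬StacksOn p q := by
    intro q hq p hp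
    obtain ⟨a, ha, rfl⟩ := mem_stem.1 hp
    obtain ⟨q, hq', rfl⟩ := mem_shift.1 hq
    have := hQ q hq'
    refine ⟨fun h => by simp only [StacksOn] at h; omega, fun h => h1b ?_⟩
    simp only [StacksOn] at h
    convert hq' using 1
    exact Prod.ext (by omega) (by omega)
  have hStack : StackCond s (nest t b Q) ↔ StackCond s Q := by
    rw [← stackCond_shift hQ (c := t), nest]
    refine ⟨fun h => StackCond.of_union_left hB hStem hAB (by rwa [union_comm]), fun h =>
      StackCond.union (stackCond_stem hst (by omega)) h⟩
  rw [Admissible, Admissible, nest, endsDistinct_union hApart, noncrossing_union hApart, ← nest,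
    endsDistinct_shift, noncrossing_shift, hairpinsAtLeast_nest hQ ht, hStack]
  simp only [endsDistinct_stem (show 2 * t ≤ b + 2 * t by omega),
    noncrossing_stem (show 2 * t ≤ b + 2 * t by omega), true_and]
  tauto

lemma isSecStruct_nest_iff (ht : 0 < t) (hst : s ≤ t) (h1b : (1, b) ∉ Q) :
    IsSecStruct s m (b + 2 * t) (nest t b Q) ↔ IsSecStruct s m b Q ∧ (Q = ∅ → m ≤ b) := by
  simp only [isSecStruct_iff, inBlock_nest hQ, hQ, admissible_nest hQ ht hst h1b, true_and]

end

lemma mk_mem_nest_iff (hst : s ≤ t) (h1b : (1, b) ∉ Q) :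
    (1 + s, b + 2 * t - s) ∈ nest t b Q ↔ s < t := by
  refine ⟨fun h => ?_, fun h => mem_union_left _ (mk_mem_stem h)⟩
  by_contra hts
  obtain rfl : s = t := by omega
  rcases mem_union.1 h with h | h
  · obtain ⟨a, ha, he⟩ := mem_stem.1 h
    simp only [Prod.mk.injEq] at he
    omega
  · obtain ⟨-, -, h⟩ := mem_shift_iff_le.1 h
    exact h1b (by convert h using 2 <;> dsimp only <;> omega)

lemma mk_one_mem_nest_iff (hQ : InBlock 0 b Q) (ht : 0 < t) :
    (1, x) ∈ nest t b Q ↔ x = b + 2 * t := by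
  constructor
  · intro h
    rcases mem_union.1 h with h | h
    · obtain ⟨a, ha, he⟩ := mem_stem.1 h
      simp only [Prod.mk.injEq] at he
      omega
    · have := hQ.shift t _ h
      dsimp only at this
      omega
  · rintro rfl
    exact mem_union_left _ (by simpa using mk_mem_stem (n := b + 2 * t) ht)

lemma stem_succ (h : t ≤ n) : stem (t + 1) (n + 2) = insert (1, n + 2) (shift 1 (stem t n)) := by
  ext p
  simp only [mem_insert, mem_shift, mem_stem]
  constructor
  · rintro ⟨a, ha, rfl⟩
    rcases a with _ | a
    · simp
    · exact Or.inr ⟨_, ⟨a, by omega, rfl⟩, Prod.ext (by dsimp only; omega) (by dsimp only; omega)⟩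
  · rintro (rfl | ⟨_, ⟨a, ha, rfl⟩, rfl⟩)
    · exact ⟨0, by omega, by simp⟩
    · exact ⟨a + 1, by omega, Prod.ext (by dsimp only; omega) (by dsimp only; omega)⟩

lemma nest_succ : nest (t + 1) b Q = insert (1, b + 2 * t + 2) (shift 1 (nest t b Q)) := by
  rw [nest, nest, shift_union, shift_shift, ← insert_union,
    show b + 2 * (t + 1) = b + 2 * t + 2 by ring, stem_succ (by omega)]

lemma exists_eq_nest_of_stem_subset (hP : InBlock 0 (b + 2 * t) P) (hd : EndsDistinct P)
    (hstem : stem t (b + 2 * t) ⊆ P) : ∃ Q, InBlock 0 b Q ∧ P = nest t b Q := by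
  have hinside : InBlock t (t + b) (P \ stem t (b + 2 * t)) := by
    intro p hp
    obtain ⟨hpP, hps⟩ := mem_sdiff.1 hp
    have hpb := hP p hpP
    have hshare : ∀ a < t, (1 + a = p.1 ∨ b + 2 * t - a = p.2) → False := fun a ha he => by
      have hsP := hstem (mk_mem_stem ha)
      have hne : p ≠ (1 + a, b + 2 * t - a) := fun h => hps (h ▸ mk_mem_stem ha)
      have := hd p hpP _ hsP hne
      dsimp only at this
      omega
    refine ⟨by_contra fun h => hshare (p.1 - 1) (by omega) (Or.inl (by omega)), hpb.2.1,
      by_contra fun h => hshare (b + 2 * t - p.2) (by omega) (Or.inr (by omega))⟩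
  obtain ⟨Q, hQ, hQeq⟩ := exists_eq_shift hinside
  exact ⟨Q, hQ, by rw [nest, ← hQeq, union_sdiff_of_subset hstem]⟩

/-- Here `(1, b) ∉ Q` says that the stem is maximal. -/
lemma exists_eq_nest (h : IsSecStruct s m n P) (h1n : (1, n) ∈ P) :
    ∃ t b Q, 0 < t ∧ s ≤ t ∧ b + 2 * t = n ∧ InBlock 0 b Q ∧ (1, b) ∉ Q ∧ P = nest t b Q := by
  have hP := h.inBlock
  have hex : ∃ k, (1 + k, n - k) ∉ P := ⟨n, fun h' => by have := hP _ h'; dsimp only at this; omega⟩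
  obtain ⟨t, htdef⟩ : ∃ t, Nat.find hex = t := ⟨_, rfl⟩
  have hmiss : (1 + t, n - t) ∉ P := htdef ▸ Nat.find_spec hex
  have hrun : ∀ a < t, (1 + a, n - a) ∈ P := fun a ha =>
    not_not.1 (Nat.find_min hex (htdef ▸ ha))
  have ht : 0 < t := Nat.pos_of_ne_zero fun h0 => hmiss (by simpa [h0] using h1n)
  have h2t : 2 * t ≤ n := by have := hP _ (hrun (t - 1) (by omega)); dsimp only at this; omega
  have hst : s ≤ t := by
    obtain ⟨T, hT, hTrun⟩ := h.2 _ h1n fun h' => by have := hP _ h'; dsimp only at this; omega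
    by_contra hlt
    exact hmiss (by simpa using hTrun t (by omega))
  obtain ⟨b, rfl⟩ : ∃ b, n = b + 2 * t := ⟨n - 2 * t, by omega⟩
  obtain ⟨Q, hQ, hPQ⟩ := exists_eq_nest_of_stem_subset hP h.endsDistinct fun p hp => by
    obtain ⟨a, ha, rfl⟩ := mem_stem.1 hp
    exact hrun a ha
  refine ⟨t, b, Q, ht, hst, rfl, hQ, fun h1b => hmiss ?_, hPQ⟩
  rw [hPQ]
  refine mem_union_right _ ?_
  convert shift_mem_shift (c := t) h1b using 2
  dsimp only
  omega

end Nest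

section Counting

open Finset.HasAntidiagonal

variable {d e f : Fin 3 →₀ ℕ}

/-- The exponent vector of `z ^ x * w ^ y * u ^ k`. -/
noncomputable def deg3 (x y k : ℕ) : Fin 3 →₀ ℕ :=
  Finsupp.single 0 x + Finsupp.single 1 y + Finsupp.single 2 k

@[simp] lemma deg3_apply_zero {x y k : ℕ} : deg3 x y k 0 = x := by simp [deg3]
@[simp] lemma deg3_apply_one {x y k : ℕ} : deg3 x y k 1 = y := by simp [deg3]
@[simp] lemma deg3_apply_two {x y k : ℕ} : deg3 x y k 2 = k := by simp [deg3]

lemma fin3_ext (h0 : d 0 = e 0) (h1 : d 1 = e 1) (h2 : d 2 = e 2) : d = e := by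
  ext i
  fin_cases i
  exacts [h0, h1, h2]

lemma deg3_add {x y k x' y' k' : ℕ} :
    deg3 x y k + deg3 x' y' k' = deg3 (x + x') (y + y') (k + k') :=
  fin3_ext (by simp) (by simp) (by simp)

lemma fin3_eq_iff {e : Fin 3 →₀ ℕ} : d = e ↔ d 0 = e 0 ∧ d 1 = e 1 ∧ d 2 = e 2 :=
  ⟨by rintro rfl; simp, fun ⟨h0, h1, h2⟩ => fin3_ext h0 h1 h2⟩

lemma card_eq_ite_of_graded_bij {σ α β : Type*} {X : (σ →₀ ℕ) → Finset α}
    {Y : (σ →₀ ℕ) → Finset β} (v : σ →₀ ℕ) (g : (σ →₀ ℕ) → α → β)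
    (hmaps : ∀ e, ∀ x ∈ X e, g e x ∈ Y (e + v))
    (hinj : ∀ e, ∀ x ∈ X e, ∀ x' ∈ X e, g e x = g e x' → x = x')
    (hsurj : ∀ d, ∀ y ∈ Y d, v ≤ d ∧ ∃ x ∈ X (d - v), g (d - v) x = y) (d : σ →₀ ℕ) :
    #(Y d) = if v ≤ d then #(X (d - v)) else 0 := by
  split_ifs with hv
  · symm
    refine card_bij (fun x _ => g (d - v) x) (fun x hx => ?_)
      (fun x hx x' hx' h => hinj _ x hx x' hx' h) fun y hy => ?_
    · simpa [tsub_add_cancel_of_le hv] using hmaps _ x hx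
    · obtain ⟨-, x, hx, rfl⟩ := hsurj d y hy
      exact ⟨x, hx, rfl⟩
  · exact card_eq_zero.2 (eq_empty_of_forall_notMem fun y hy => hv (hsurj d y hy).1)

noncomputable def structs (s m : ℕ) (d : Fin 3 →₀ ℕ) : Finset (Finset (ℕ × ℕ)) :=
  (secFinset s m (d 0)).filter fun P => #P = d 1 ∧ numHairpins P = d 2

lemma mem_secFinset : P ∈ secFinset s m n ↔ IsSecStruct s m n P := by
  refine ⟨fun h => (mem_filter.1 h).2, fun h => mem_filter.2 ⟨mem_powerset.2 fun p hp => ?_, h⟩⟩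
  have := h.inBlock p hp
  simp only [mem_product, mem_range]
  omega

lemma mem_structs :
    P ∈ structs s m d ↔ IsSecStruct s m (d 0) P ∧ #P = d 1 ∧ numHairpins P = d 2 := by
  rw [structs, mem_filter, mem_secFinset]

lemma coeff_Rgf3 : MvPowerSeries.coeff d (Rgf3 s m) = #(structs s m d) := rfl

lemma eq_of_mem_structs (h : P ∈ structs s m d) (h' : P ∈ structs s m e) (h0 : d 0 = e 0) :
    d = e := by
  rw [mem_structs] at h h'
  exact fin3_ext h0 (h.2.1.symm.trans h'.2.1) (h.2.2.symm.trans h'.2.2)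

noncomputable def closedStructs (s m : ℕ) (d : Fin 3 →₀ ℕ) : Finset (Finset (ℕ × ℕ)) :=
  (structs s m d).filter fun P => (1, d 0) ∈ P

lemma union_shift_mem_structs (hQ : Q ∈ closedStructs s m e) (hA : A ∈ structs s m f) :
    A ∪ shift (f 0) Q ∈ structs s m (e + f) ∧ Paired (A ∪ shift (f 0) Q) ((e + f) 0) := by
  obtain ⟨⟨hQs, hQc, hQh⟩, hQ1⟩ := (mem_filter.1 hQ).imp_left mem_structs.1
  obtain ⟨hAs, hAc, hAh⟩ := mem_structs.1 hA
  have hsum : (e + f) 0 = f 0 + e 0 := by rw [Finsupp.add_apply, add_comm]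
  refine ⟨mem_structs.2 ⟨?_, ?_, ?_⟩, ⟨_, mem_union_right _ (shift_mem_shift hQ1), Or.inr ?_⟩⟩
  · rw [hsum]
    exact (isSecStruct_union_shift hAs.inBlock hQs.inBlock).2 ⟨hAs, hQs⟩
  · rw [card_union_shift hAs.inBlock hQs.inBlock, Finsupp.add_apply]
    omega
  · rw [numHairpins_union_shift hAs.inBlock hQs.inBlock, Finsupp.add_apply]
    omega
  · dsimp only
    omega

lemma exists_union_shift_of_paired (hP : P ∈ structs s m d) (hpair : Paired P (d 0)) :
    ∃ e f Q A, e + f = d ∧ Q ∈ closedStructs s m e ∧ A ∈ structs s m f ∧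
      P = A ∪ shift (f 0) Q := by
  obtain ⟨hPs, hPc, hPh⟩ := mem_structs.1 hP
  obtain ⟨p, hp, hpd⟩ := hpair
  have hpb := hPs.inBlock p hp
  obtain ⟨a, b, hab, hd⟩ : ∃ a b, p.1 = a + 1 ∧ d 0 = a + b :=
    ⟨p.1 - 1, d 0 - (p.1 - 1), by omega, by omega⟩
  have hmem : (a + 1, a + b) ∈ P := by convert hp using 1; exact Prod.ext hab.symm (by omega)
  rw [hd] at hPs
  obtain ⟨A, Q, hA, hQ, rfl⟩ := exists_eq_union_shift hPs hmem
  obtain ⟨hAs, hQs⟩ := (isSecStruct_union_shift hA hQ).1 hPs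
  have h1b : (1, b) ∈ Q := by
    rcases mem_union.1 hmem with h | h
    · have := hA _ h; dsimp only at this; omega
    · exact mk_add_mem_shift.1 (by rwa [add_comm 1 a, add_comm b a])
  refine ⟨deg3 b #Q (numHairpins Q), deg3 a #A (numHairpins A), Q, A, fin3_ext ?_ ?_ ?_,
    mem_filter.2 ⟨mem_structs.2 ⟨by simpa using hQs, by simp, by simp⟩, by simpa using h1b⟩,
    mem_structs.2 ⟨by simpa using hAs, by simp, by simp⟩, by simp⟩
  · simp [hd, add_comm]
  · simp [← hPc, card_union_shift hA hQ, add_comm]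
  · simp [← hPh, numHairpins_union_shift hA hQ, add_comm]

lemma card_filter_paired_last :
    #((structs s m d).filter fun P => Paired P (d 0)) =
      ∑ p ∈ antidiagonal d, #(closedStructs s m p.1) * #(structs s m p.2) := by
  simp_rw [← card_product]
  rw [← card_sigma]
  symm
  refine card_bij (fun x _ => x.2.2 ∪ shift (x.1.2 0) x.2.1) ?_ ?_ ?_
  · rintro ⟨⟨e, f⟩, Q, A⟩ hx
    simp only [mem_sigma, HasAntidiagonal.mem_antidiagonal, mem_product] at hx
    obtain ⟨rfl, hQ, hA⟩ := hx
    exact mem_filter.2 (union_shift_mem_structs hQ hA)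
  · rintro ⟨⟨e, f⟩, Q, A⟩ hx ⟨⟨e', f'⟩, Q', A'⟩ hx' h
    simp only [mem_sigma, HasAntidiagonal.mem_antidiagonal, mem_product] at hx hx' h
    obtain ⟨rfl, hQ, hA⟩ := hx
    obtain ⟨hee, hQ', hA'⟩ := hx'
    have hP := (union_shift_mem_structs hQ hA).1
    have hP' := (union_shift_mem_structs hQ' hA').1
    have h1 := mem_union_right A (shift_mem_shift (c := f 0) (mem_filter.1 hQ).2)
    have h1' := mem_union_right A' (shift_mem_shift (c := f' 0) (mem_filter.1 hQ').2)
    rw [← h] at h1'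
    have hsum := congrArg (· 0) hee
    simp only [Finsupp.add_apply] at hsum
    have hf0 : f 0 = f' 0 := by
      by_contra hne
      have := (mem_structs.1 hP).1.endsDistinct _ h1 _ h1' (by simp [hne])
      dsimp only at this
      omega
    have hAb' := (mem_structs.1 hA').1.inBlock
    have hQb' := (mem_structs.1 (mem_filter.1 hQ').1).1.inBlock
    rw [← hf0] at h hAb'
    rw [show e' 0 = e 0 by omega] at hQb'
    obtain ⟨rfl, rfl⟩ := union_shift_inj (mem_structs.1 hA).1.inBlock hAb'
      (mem_structs.1 (mem_filter.1 hQ).1).1.inBlock hQb' h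
    obtain rfl := eq_of_mem_structs hA hA' hf0
    obtain rfl := add_right_cancel hee
    rfl
  · intro P hP
    obtain ⟨hP, hpair⟩ := mem_filter.1 hP
    obtain ⟨e, f, Q, A, hef, hQ, hA, rfl⟩ := exists_union_shift_of_paired hP hpair
    exact ⟨⟨(e, f), Q, A⟩, by simp [hef, hQ, hA], rfl⟩

lemma single_le_iff : Finsupp.single 0 1 ≤ d ↔ d 0 ≠ 0 := by
  simp [Nat.one_le_iff_ne_zero]

@[simp] lemma sub_single_apply_zero : (d - Finsupp.single 0 1 : Fin 3 →₀ ℕ) 0 = d 0 - 1 := by simp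
@[simp] lemma sub_single_apply_one : (d - Finsupp.single 0 1 : Fin 3 →₀ ℕ) 1 = d 1 := by simp
@[simp] lemma sub_single_apply_two : (d - Finsupp.single 0 1 : Fin 3 →₀ ℕ) 2 = d 2 := by simp

lemma filter_not_paired_last (h : d 0 ≠ 0) :
    (structs s m d).filter (fun P => ¬Paired P (d 0)) = structs s m (d - Finsupp.single 0 1) := by
  ext P
  obtain ⟨n, hn⟩ : ∃ n, d 0 = n + 1 := ⟨d 0 - 1, by omega⟩
  simp only [mem_filter, mem_structs, sub_single_apply_zero, sub_single_apply_one,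
    sub_single_apply_two, hn, add_tsub_cancel_right, ← isSecStruct_succ_iff (n := n)]
  tauto

lemma structs_of_eq_zero (h : d 0 = 0) : structs s m d = if d = 0 then {∅} else ∅ := by
  have hempty : ∀ P ∈ structs s m d, P = ∅ := fun P hP =>
    (mem_structs.1 hP).1.inBlock.eq_empty_of_le (h ▸ le_rfl)
  split_ifs with hd
  · refine eq_singleton_iff_unique_mem.2 ⟨mem_structs.2 ⟨isSecStruct_empty, ?_, ?_⟩, hempty⟩ <;>
      simp [hd, numHairpins]
  · refine eq_empty_of_forall_notMem fun P hP => hd (fin3_ext h ?_ ?_) <;>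
      obtain ⟨-, h1, h2⟩ := mem_structs.1 hP <;> simp [← h1, ← h2, hempty P hP, numHairpins]

lemma card_structs :
    #(structs s m d) = (if d = 0 then 1 else 0) +
      (if d 0 ≠ 0 then #(structs s m (d - Finsupp.single 0 1)) else 0) +
      ∑ p ∈ antidiagonal d, #(closedStructs s m p.1) * #(structs s m p.2) := by
  rw [← card_filter_paired_last, ← card_filter_add_card_filter_not (fun P => Paired P (d 0)),
    add_comm]
  congr 1
  by_cases h0 : d 0 = 0
  · rw [if_neg (not_not.2 h0), add_zero, filter_true_of_mem
      fun P hP h => by have := (mem_structs.1 hP).1.inBlock.paired h; omega, structs_of_eq_zero h0]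
    split_ifs <;> rfl
  · rw [if_neg (show d ≠ 0 from fun h => h0 (by rw [h]; rfl)), if_pos h0, zero_add,
      filter_not_paired_last h0]

end Counting

section Closed

variable {d e : Fin 3 →₀ ℕ}

/-- The statistics of `Q` seen as the inside of a stem: an empty `Q` leaves a hairpin. -/
noncomputable def innerDeg (b : ℕ) (Q : Finset (ℕ × ℕ)) : Fin 3 →₀ ℕ :=
  deg3 b #Q (if Q = ∅ then 1 else numHairpins Q)

lemma nest_mem_closedStructs_iff (hQ : InBlock 0 b Q) (h1b : (1, b) ∉ Q) (ht : 0 < t)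
    (hst : s ≤ t) :
    nest t b Q ∈ closedStructs s m d ↔
      (IsSecStruct s m b Q ∧ (Q = ∅ → m ≤ b)) ∧ d = innerDeg b Q + deg3 (2 * t) t 0 := by
  rw [closedStructs, mem_filter, mem_structs, mk_one_mem_nest_iff hQ ht]
  constructor
  · rintro ⟨⟨hP, hc, hh⟩, hd⟩
    rw [hd] at hP
    refine ⟨(isSecStruct_nest_iff hQ ht hst h1b).1 hP, fin3_ext ?_ ?_ ?_⟩ <;>
      simp [innerDeg, hd, ← hc, ← hh, card_nest hQ, numHairpins_nest hQ ht, add_comm]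
  · rintro ⟨hQs, rfl⟩
    refine ⟨⟨?_, ?_, ?_⟩, ?_⟩ <;>
      simp [innerDeg, card_nest hQ, numHairpins_nest hQ ht,
        (isSecStruct_nest_iff hQ ht hst h1b).2 hQs, add_comm]

lemma exists_nest_of_mem_closedStructs (hP : P ∈ closedStructs s m d) :
    ∃ t b Q, 0 < t ∧ s ≤ t ∧ InBlock 0 b Q ∧ (1, b) ∉ Q ∧ IsSecStruct s m b Q ∧
      (Q = ∅ → m ≤ b) ∧ d = innerDeg b Q + deg3 (2 * t) t 0 ∧ P = nest t b Q := by
  obtain ⟨hPs, h1⟩ := mem_filter.1 hP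
  obtain ⟨t, b, Q, ht, hst, -, hQ, h1b, rfl⟩ := exists_eq_nest (mem_structs.1 hPs).1 h1
  obtain ⟨⟨hQs, hm⟩, hd⟩ := (nest_mem_closedStructs_iff hQ h1b ht hst).1 hP
  exact ⟨t, b, Q, ht, hst, hQ, h1b, hQs, hm, hd, rfl⟩

lemma innerDeg_add_succ :
    innerDeg b Q + deg3 (2 * (t + 1)) (t + 1) 0 = innerDeg b Q + deg3 (2 * t) t 0 + deg3 2 1 0 := by
  rw [add_assoc, deg3_add, mul_add, mul_one]

lemma card_filter_closedStructs_mem (hs : 0 < s) :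
    #((closedStructs s m d).filter fun P => (1 + s, d 0 - s) ∈ P) =
      if deg3 2 1 0 ≤ d then #(closedStructs s m (d - deg3 2 1 0)) else 0 := by
  refine card_eq_ite_of_graded_bij (X := closedStructs s m)
    (Y := fun d => (closedStructs s m d).filter fun P => (1 + s, d 0 - s) ∈ P) _
    (fun e P => insert (1, e 0 + 2) (shift 1 P)) ?_ ?_ ?_ d
  · intro e P hP
    obtain ⟨t, b, Q, ht, hst, hQ, h1b, hQs, hm, rfl, rfl⟩ := exists_nest_of_mem_closedStructs hP
    have hsucc : insert (1, (innerDeg b Q + deg3 (2 * t) t 0) 0 + 2) (shift 1 (nest t b Q)) =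
        nest (t + 1) b Q := by
      rw [nest_succ]
      simp [innerDeg]
    rw [hsucc, ← innerDeg_add_succ, mem_filter,
      nest_mem_closedStructs_iff hQ h1b (by omega) (by omega)]
    refine ⟨⟨⟨hQs, hm⟩, rfl⟩, ?_⟩
    simpa [innerDeg, mul_add] using (mk_mem_nest_iff (t := t + 1) (by omega) h1b).2 (by omega)
  · intro e P hP P' hP' h
    have hnot : ∀ {R}, R ∈ closedStructs s m e → (1, e 0 + 2) ∉ shift 1 R := fun hR h' => by
      have := (mem_structs.1 (mem_filter.1 hR).1).1.inBlock.shift 1 _ h'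
      dsimp only at this
      omega
    apply shift_injective (c := 1)
    rw [← erase_insert (hnot hP), h, erase_insert (hnot hP')]
  · intro d P hP
    obtain ⟨hP, hmem⟩ := mem_filter.1 hP
    obtain ⟨t, b, Q, ht, hst, hQ, h1b, hQs, hm, rfl, rfl⟩ := exists_nest_of_mem_closedStructs hP
    have hlt : s < t := (mk_mem_nest_iff hst h1b).1 (by simpa [innerDeg] using hmem)
    obtain ⟨t, rfl⟩ : ∃ t', t = t' + 1 := ⟨t - 1, by omega⟩
    rw [innerDeg_add_succ, add_tsub_cancel_right]
    refine ⟨le_add_self, nest t b Q, (nest_mem_closedStructs_iff hQ h1b (by omega) (by omega)).2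
      ⟨⟨hQs, hm⟩, rfl⟩, ?_⟩
    rw [nest_succ]
    simp [innerDeg]

noncomputable def innerStructs (s m : ℕ) (e : Fin 3 →₀ ℕ) : Finset (Finset (ℕ × ℕ)) :=
  (secFinset s m (e 0)).filter fun Q => (1, e 0) ∉ Q ∧ (Q = ∅ → m ≤ e 0) ∧ innerDeg (e 0) Q = e

lemma mem_innerStructs : Q ∈ innerStructs s m e ↔
    IsSecStruct s m (e 0) Q ∧ (1, e 0) ∉ Q ∧ (Q = ∅ → m ≤ e 0) ∧ innerDeg (e 0) Q = e := by
  rw [innerStructs, mem_filter, mem_secFinset]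

lemma card_filter_closedStructs_not_mem (hs : 0 < s) :
    #((closedStructs s m d).filter fun P => (1 + s, d 0 - s) ∉ P) =
      if deg3 (2 * s) s 0 ≤ d then #(innerStructs s m (d - deg3 (2 * s) s 0)) else 0 := by
  refine card_eq_ite_of_graded_bij (X := innerStructs s m)
    (Y := fun d => (closedStructs s m d).filter fun P => (1 + s, d 0 - s) ∉ P) _
    (fun e Q => nest s (e 0) Q) ?_ ?_ ?_ d
  · intro e Q hQ
    obtain ⟨hQs, h1b, hm, he⟩ := mem_innerStructs.1 hQ
    have h0 : (e + deg3 (2 * s) s 0) 0 = e 0 + 2 * s := by simp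
    refine mem_filter.2 ⟨(nest_mem_closedStructs_iff hQs.inBlock h1b hs le_rfl).2
      ⟨⟨hQs, hm⟩, by rw [he]⟩, ?_⟩
    rw [h0, mk_mem_nest_iff le_rfl h1b]
    exact lt_irrefl s
  · intro e Q hQ Q' hQ' h
    exact nest_inj (mem_innerStructs.1 hQ).1.inBlock (mem_innerStructs.1 hQ').1.inBlock h
  · intro d P hP
    obtain ⟨hP, hmem⟩ := mem_filter.1 hP
    obtain ⟨t, b, Q, ht, hst, hQ, h1b, hQs, hm, rfl, rfl⟩ := exists_nest_of_mem_closedStructs hP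
    obtain rfl : s = t := by
      by_contra hne
      exact hmem (by simpa [innerDeg] using (mk_mem_nest_iff hst h1b).2 (by omega))
    rw [add_tsub_cancel_right]
    exact ⟨le_add_self, Q, mem_innerStructs.2 (by simpa [innerDeg] using ⟨hQs, h1b, hm⟩),
      by simp [innerDeg]⟩

lemma card_innerStructs :
    #(innerStructs s m e) + #(closedStructs s m e) + (if e 1 = 0 ∧ e 2 = 0 then 1 else 0) =
      #(structs s m e) + (if e 1 = 0 ∧ e 2 = 1 ∧ m ≤ e 0 then 1 else 0) := by
  set N := (structs s m e).filter fun Q => (1, e 0) ∉ Q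
  have hne : (innerStructs s m e).filter (· ≠ ∅) = N.filter (· ≠ ∅) := by
    ext Q
    simp only [N, mem_filter, mem_innerStructs, mem_structs, innerDeg]
    constructor
    · rintro ⟨⟨hQs, h1, -, hd⟩, hQe⟩
      rw [← hd]
      simp [hQs, h1, hQe]
    · rintro ⟨⟨⟨hQs, hc, hh⟩, h1⟩, hQe⟩
      exact ⟨⟨hQs, h1, fun h => absurd h hQe,
        fin3_ext (by simp) (by simp [hc]) (by simp [hQe, hh])⟩, hQe⟩
  have hinner : ∅ ∈ innerStructs s m e ↔ e 1 = 0 ∧ e 2 = 1 ∧ m ≤ e 0 := by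
    rw [mem_innerStructs]
    constructor
    · rintro ⟨-, -, hm, hd⟩
      rw [← hd]
      simpa [innerDeg] using hm
    · rintro ⟨h1, h2, hm⟩
      exact ⟨isSecStruct_empty, by simp, fun _ => hm, fin3_ext (by simp [innerDeg])
        (by simp [innerDeg, h1]) (by simp [innerDeg, h2])⟩
  have hopen : ∅ ∈ N ↔ e 1 = 0 ∧ e 2 = 0 := by
    simp [N, mem_structs, isSecStruct_empty, numHairpins, eq_comm]
  rw [← card_filter_add_card_filter_not (s := structs s m e) (fun Q => (1, e 0) ∈ Q),
    ← card_filter_add_card_filter_not (s := innerStructs s m e) (· ≠ ∅),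
    ← card_filter_add_card_filter_not (s := N) (· ≠ ∅), hne]
  simp only [not_not, filter_eq', hinner, hopen, closedStructs]
  split_ifs <;> simp only [card_singleton, card_empty] <;> omega

end Closed

section Series

open MvPowerSeries

variable {d : Fin 3 →₀ ℕ}

noncomputable def closedGF (s m : ℕ) : MvPowerSeries (Fin 3) ℚ := fun d => #(closedStructs s m d)

/-- The series `1 / (1 - z)`. -/
noncomputable def emptyGF : MvPowerSeries (Fin 3) ℚ := fun d => if d 1 = 0 ∧ d 2 = 0 then 1 else 0

/-- The series `u z ^ m / (1 - z)` of hairpin loops. -/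
noncomputable def loopGF (m : ℕ) : MvPowerSeries (Fin 3) ℚ :=
  fun d => if d 1 = 0 ∧ d 2 = 1 ∧ m ≤ d 0 then 1 else 0

lemma X_pow_mul_X_pow {x y : ℕ} :
    (X 0 ^ x * X 1 ^ y : MvPowerSeries (Fin 3) ℚ) = monomial (deg3 x y 0) 1 := by
  rw [X_pow_eq, X_pow_eq, monomial_mul_monomial, one_mul, deg3, Finsupp.single_zero, add_zero]

lemma X_sq_mul_X : (X 0 ^ 2 * X 1 : MvPowerSeries (Fin 3) ℚ) = monomial (deg3 2 1 0) 1 := by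
  rw [← X_pow_mul_X_pow, pow_one]

lemma X_mul_X_pow {x : ℕ} :
    (X 2 * X 0 ^ x : MvPowerSeries (Fin 3) ℚ) = monomial (deg3 x 0 1) 1 := by
  rw [X_def, X_pow_eq, monomial_mul_monomial, one_mul, deg3, Finsupp.single_zero, add_zero,
    add_comm]

lemma coeff_X_zero_mul (F : MvPowerSeries (Fin 3) ℚ) :
    coeff d (X 0 * F) = if d 0 ≠ 0 then coeff (d - Finsupp.single 0 1) F else 0 := by
  rw [X_def, coeff_monomial_mul, one_mul]
  simp only [single_le_iff]

lemma coeff_one_sub_X_zero_mul (F : MvPowerSeries (Fin 3) ℚ) :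
    coeff d ((1 - X 0) * F) =
      coeff d F - if d 0 ≠ 0 then coeff (d - Finsupp.single 0 1) F else 0 := by
  rw [sub_mul, one_mul, map_sub, coeff_X_zero_mul]

lemma one_sub_X_mul_emptyGF : (1 - X 0 : MvPowerSeries (Fin 3) ℚ) * emptyGF = 1 := by
  ext d
  rw [coeff_one_sub_X_zero_mul, coeff_one]
  simp only [fin3_eq_iff, emptyGF, coeff_apply, sub_single_apply_one, sub_single_apply_two,
    Finsupp.coe_zero, Pi.zero_apply]
  split_ifs <;> first | omega | norm_num

lemma one_sub_X_mul_loopGF (m : ℕ) :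
    (1 - X 0 : MvPowerSeries (Fin 3) ℚ) * loopGF m = X 2 * X 0 ^ m := by
  ext d
  rw [coeff_one_sub_X_zero_mul, X_mul_X_pow, coeff_monomial]
  simp only [fin3_eq_iff, loopGF, coeff_apply, sub_single_apply_zero, sub_single_apply_one,
    sub_single_apply_two, deg3_apply_zero, deg3_apply_one, deg3_apply_two]
  split_ifs <;> first | omega | norm_num

lemma rgf3_eq : Rgf3 s m = 1 + X 0 * Rgf3 s m + closedGF s m * Rgf3 s m := by
  ext d
  rw [map_add, map_add, coeff_one, coeff_X_zero_mul, coeff_mul, coeff_Rgf3, coeff_Rgf3,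
    card_structs]
  simp only [coeff_Rgf3]
  push_cast
  rfl

lemma coeff_closedGF : coeff d (closedGF s m) = #(closedStructs s m d) := rfl

lemma coeff_innerGF :
    coeff d (Rgf3 s m - closedGF s m - emptyGF + loopGF m) = #(innerStructs s m d) := by
  have h : (#(innerStructs s m d) + #(closedStructs s m d) + (if d 1 = 0 ∧ d 2 = 0 then 1 else 0) :
      ℚ) = #(structs s m d) + (if d 1 = 0 ∧ d 2 = 1 ∧ m ≤ d 0 then 1 else 0) := by
    exact_mod_cast card_innerStructs
  rw [map_add, map_sub, map_sub, coeff_Rgf3, coeff_closedGF]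
  simp only [emptyGF, loopGF, coeff_apply]
  split_ifs at h ⊢ <;> linarith

lemma one_sub_mul_closedGF (hs : 0 < s) :
    (1 - X 0 ^ 2 * X 1 : MvPowerSeries (Fin 3) ℚ) * closedGF s m =
      X 0 ^ (2 * s) * X 1 ^ s * (Rgf3 s m - closedGF s m - emptyGF + loopGF m) := by
  ext d
  have hsplit := card_filter_add_card_filter_not (s := closedStructs s m d)
    (fun P => (1 + s, d 0 - s) ∈ P)
  rw [card_filter_closedStructs_mem hs, card_filter_closedStructs_not_mem hs] at hsplit
  rw [X_sq_mul_X, X_pow_mul_X_pow, sub_mul, one_mul, map_sub, coeff_monomial_mul,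
    coeff_monomial_mul, one_mul, one_mul, coeff_innerGF, coeff_closedGF, coeff_closedGF, ← hsplit]
  split_ifs <;> push_cast <;> ring

end Series

end SecStruct

theorem stmt9_general (s m : ℕ) (hs : 1 ≤ s) :
    (1 - MvPowerSeries.X 0 : MvPowerSeries (Fin 3) ℚ)
        * MvPowerSeries.X 0 ^ (2 * s) * MvPowerSeries.X 1 ^ s * Rgf3 s m ^ 2
      - ((1 - MvPowerSeries.X 0) ^ 2
            * (1 - MvPowerSeries.X 0 ^ 2 * MvPowerSeries.X 1
                + MvPowerSeries.X 0 ^ (2 * s) * MvPowerSeries.X 1 ^ s)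
          + MvPowerSeries.X 0 ^ (2 * s) * MvPowerSeries.X 1 ^ s
            * (1 - MvPowerSeries.X 2 * MvPowerSeries.X 0 ^ m)) * Rgf3 s m
      + (1 - MvPowerSeries.X 0)
          * (1 - MvPowerSeries.X 0 ^ 2 * MvPowerSeries.X 1
              + MvPowerSeries.X 0 ^ (2 * s) * MvPowerSeries.X 1 ^ s) = 0 := by
  open MvPowerSeries SecStruct in
  linear_combination
    -((1 - X 0) * (1 - X 0 ^ 2 * X 1 + X 0 ^ (2 * s) * X 1 ^ s)) * rgf3_eq (s := s) (m := m)
    - ((1 - X 0) * Rgf3 s m) * one_sub_mul_closedGF (m := m) hs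
    + (X 0 ^ (2 * s) * X 1 ^ s * Rgf3 s m) * one_sub_X_mul_emptyGF
    - (X 0 ^ (2 * s) * X 1 ^ s * Rgf3 s m) * one_sub_X_mul_loopGF m

theorem stmt9 (s m : ℕ) (hs : 1 ≤ s) (hm : 1 ≤ m) :
    (1 - MvPowerSeries.X 0 : MvPowerSeries (Fin 3) ℚ)
        * MvPowerSeries.X 0 ^ (2 * s) * MvPowerSeries.X 1 ^ s * Rgf3 s m ^ 2
      - ((1 - MvPowerSeries.X 0) ^ 2
            * (1 - MvPowerSeries.X 0 ^ 2 * MvPowerSeries.X 1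
                + MvPowerSeries.X 0 ^ (2 * s) * MvPowerSeries.X 1 ^ s)
          + MvPowerSeries.X 0 ^ (2 * s) * MvPowerSeries.X 1 ^ s
            * (1 - MvPowerSeries.X 2 * MvPowerSeries.X 0 ^ m)) * Rgf3 s m
      + (1 - MvPowerSeries.X 0)
          * (1 - MvPowerSeries.X 0 ^ 2 * MvPowerSeries.X 1
              + MvPowerSeries.X 0 ^ (2 * s) * MvPowerSeries.X 1 ^ s) = 0 :=
  stmt9_general s m hs
end

section
/- For every integer k ≥ 1, the generating function B_k satisfies z^{2s}·B_k(z) = z^{2k}·(1 − z²)·B(z) in ℚ[[z]]; in particular, for k ≥ s, B_k(z) = z^{2k−2s}(1−z²)B(z) and B(z) = ∑_{k≥s} B_k(z). -/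
open scoped Classical

/-- `b n`: the number of secondary structures of length `n` containing the pair `(1, n)`. -/
noncomputable def secCountB (s m n : ℕ) : ℕ :=
  ((secFinset s m n).filter (fun P => (1, n) ∈ P)).card

/-- The generating function `B(z) = ∑ b_n z^n` in `ℚ[[z]]`. -/
noncomputable def Bgf (s m : ℕ) : PowerSeries ℚ :=
  PowerSeries.mk fun n => (secCountB s m n : ℚ)

/-- `P` satisfies (i)–(iii), contains the pairs `(1,n),…,(k,n+1−k)` but not `(k+1,n−k)`,
and every maximal stack other than the initial one has length at least `s`. -/
def IsBkStruct (s m k n : ℕ) (P : Finset (ℕ × ℕ)) : Prop :=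
  SecBase m n P ∧ (∀ a < k, (1 + a, n - a) ∈ P) ∧ (k + 1, n - k) ∉ P ∧
  (∀ p ∈ P, p ≠ (1, n) → (p.1 - 1, p.2 + 1) ∉ P →
    ∃ t, s ≤ t ∧ ∀ a < t, (p.1 + a, p.2 - a) ∈ P)

/-- Generating function `B_k(z) = ∑ b_{k,n} z^n` in `ℚ[[z]]`. -/
noncomputable def Bkgf (s m k : ℕ) : PowerSeries ℚ :=
  PowerSeries.mk fun n =>
    (((Finset.range (n + 1) ×ˢ Finset.range (n + 1)).powerset.filter
      (IsBkStruct s m k n)).card : ℚ)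

/-! Removing the outer pair `(1, n)` and shifting all other pairs down by one is a bijection from
the structures counted by `b_{k+1,n+2}` onto those counted by `b_{k,n}` (for `k ≥ 1`), so
`B_{k+1} = z² B_k`. Sorting the structures counted by `b_n` by the length `k ≥ s` of their
outermost stack gives `b_n = ∑_{k=s}^{n} b_{k,n}`, hence `B = B_s + z² B`, that is
`(1 - z²) B = B_s`. -/

def shiftPair : ℕ × ℕ ↪ ℕ × ℕ where
  toFun p := (p.1 + 1, p.2 + 1)
  inj' p q h := by simpa [Prod.ext_iff] using h

def wrap (N : ℕ) (Q : Finset (ℕ × ℕ)) : Finset (ℕ × ℕ) :=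
  insert (1, N) (Q.map shiftPair)

noncomputable def unwrap (N : ℕ) (P : Finset (ℕ × ℕ)) : Finset (ℕ × ℕ) :=
  (P.erase (1, N)).preimage shiftPair shiftPair.injective.injOn

open PowerSeries

section

variable {s m k n N : ℕ} {P Q : Finset (ℕ × ℕ)}

@[simp] lemma shiftPair_apply (p : ℕ × ℕ) : shiftPair p = (p.1 + 1, p.2 + 1) := rfl

lemma mem_wrap {p : ℕ × ℕ} :
    p ∈ wrap N Q ↔ p = (1, N) ∨ ∃ q ∈ Q, (q.1 + 1, q.2 + 1) = p := by
  simp [wrap]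

lemma mem_unwrap {q : ℕ × ℕ} :
    q ∈ unwrap N P ↔ (q.1 + 1, q.2 + 1) ∈ P ∧ (q.1 + 1, q.2 + 1) ≠ (1, N) := by
  simp [unwrap, and_comm]

lemma paired_wrap {x : ℕ} (h : Paired Q x) : Paired (wrap N Q) (x + 1) := by
  obtain ⟨q, hq, hx⟩ := h
  exact ⟨shiftPair q, Finset.mem_insert_of_mem (Finset.mem_map_of_mem _ hq), by simpa using hx⟩

lemma secBase_wrap (hQ : SecBase m n Q) (hne : Q.Nonempty) :
    SecBase m (n + 2) (wrap (n + 2) Q) := by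
  obtain ⟨hb, hd, hc, hh⟩ := hQ
  simp only [SecBase, wrap, Finset.forall_mem_insert, Finset.forall_mem_map, shiftPair_apply]
  refine ⟨⟨by simp, fun q hq => by have := hb q hq; omega⟩,
    ⟨⟨by simp, fun q hq => by have := hb q hq; intro; omega⟩,
      fun p hp => ⟨by have := hb p hp; intro; omega,
        fun q hq hpq => by have := hd p hp q hq (by grind); omega⟩⟩,
    ⟨⟨by simp, fun q hq => by have := hb q hq; omega⟩,
      fun p hp => ⟨by have := hb p hp; omega, fun q hq => by have := hc p hp q hq; omega⟩⟩,
    ⟨fun hfree => ?_, fun q hq hfree => ?_⟩⟩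
  · obtain ⟨q, hq⟩ := hne
    have := hb q hq
    exact absurd (paired_wrap ⟨q, hq, Or.inl rfl⟩) (hfree (q.1 + 1) (by omega) (by omega))
  · have := hh q hq fun x hx₁ hx₂ hx => hfree (x + 1) (by omega) (by omega) (paired_wrap hx)
    omega

lemma paired_unwrap {x : ℕ} (hb : ∀ p ∈ P, 1 ≤ p.1 ∧ p.1 < p.2) (h : Paired P x)
    (h1 : x ≠ 1) (hN : x ≠ N) : Paired (unwrap N P) (x - 1) := by
  obtain ⟨p, hp, hx⟩ := h
  have := hb p hp
  refine ⟨(p.1 - 1, p.2 - 1), mem_unwrap.2 ?_, by omega⟩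
  have hp' : (p.1 - 1 + 1, p.2 - 1 + 1) = p := Prod.ext (by omega) (by omega)
  rw [hp']
  exact ⟨hp, by rintro rfl; omega⟩

lemma secBase_unwrap (hP : SecBase m (n + 2) P) (h1 : (1, n + 2) ∈ P) :
    SecBase m n (unwrap (n + 2) P) := by
  obtain ⟨hb, hd, hc, hh⟩ := hP
  have hbu : ∀ q ∈ unwrap (n + 2) P, 1 ≤ q.1 ∧ q.1 < q.2 ∧ q.2 ≤ n := fun q hq => by
    obtain ⟨hq, hne⟩ := mem_unwrap.1 hq
    have := hb _ hq
    have := hd _ hq _ h1 hne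
    simp only at *
    omega
  refine ⟨hbu, fun p hp q hq hpq => ?_, fun p hp q hq => ?_, fun q hq hfree => ?_⟩
  · have := hd _ (mem_unwrap.1 hp).1 _ (mem_unwrap.1 hq).1 (by simpa [Prod.ext_iff] using hpq)
    simp only at this
    omega
  · have := hc _ (mem_unwrap.1 hp).1 _ (mem_unwrap.1 hq).1
    simp only at this
    omega
  · have := hbu q hq
    suffices m ≤ q.2 + 1 - (q.1 + 1) - 1 by omega
    refine hh _ (mem_unwrap.1 hq).1 fun x hx₁ hx₂ hx => ?_
    dsimp only at hx₁ hx₂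
    exact hfree (x - 1) (by omega) (by omega)
      (paired_unwrap (fun p hp => by have := hb p hp; omega) hx (by omega) (by omega))

lemma shift_mem_wrap {q : ℕ × ℕ} (hq : q ∈ Q) : (q.1 + 1, q.2 + 1) ∈ wrap N Q :=
  Finset.mem_insert_of_mem (Finset.mem_map_of_mem shiftPair hq)

lemma shift_mem_wrap_iff {x y : ℕ} (h : (x + 1, y + 1) ≠ (1, N)) :
    (x + 1, y + 1) ∈ wrap N Q ↔ (x, y) ∈ Q := by
  simp [wrap, h]

namespace IsBkStruct

lemma outer_mem (h : IsBkStruct s m k n P) (hk : 1 ≤ k) : (1, n) ∈ P := by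
  simpa using h.2.1 0 hk

lemma two_mul_le (h : IsBkStruct s m k n P) (hk : 1 ≤ k) : 2 * k ≤ n := by
  have := h.1.1 _ (h.2.1 (k - 1) (by omega))
  omega

end IsBkStruct

lemma isBkStruct_wrap (h : IsBkStruct s m k n Q) (hk : 1 ≤ k) :
    IsBkStruct s m (k + 1) (n + 2) (wrap (n + 2) Q) := by
  have h1 := h.outer_mem hk
  have h2k := h.two_mul_le hk
  obtain ⟨hQ, hinit, hexcl, hstack⟩ := h
  refine ⟨secBase_wrap hQ ⟨_, h1⟩, fun a ha => ?_, ?_, ?_⟩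
  · rcases a with _ | a
    · exact Finset.mem_insert_self _ _
    · convert shift_mem_wrap (hinit a (by omega)) using 2 <;> omega
  · rw [show n + 2 - (k + 1) = n - k + 1 by omega, shift_mem_wrap_iff (by simp)]
    exact hexcl
  · rintro _ hp hne hnot
    obtain rfl | ⟨q, hq, rfl⟩ := mem_wrap.1 hp
    · exact absurd rfl hne
    have hb := hQ.1 q hq
    have hq1 : q ≠ (1, n) := by
      rintro rfl
      exact hnot (Finset.mem_insert_self _ _)
    obtain ⟨t, hst, ht⟩ := hstack q hq hq1 fun hq' => hnot (by
      convert shift_mem_wrap hq' using 2; omega)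
    refine ⟨t, hst, fun a ha => ?_⟩
    have := hQ.1 _ (ht a ha)
    convert shift_mem_wrap (ht a ha) using 2 <;> omega

lemma isBkStruct_unwrap (h : IsBkStruct s m (k + 1) (n + 2) P) (hk : 1 ≤ k) :
    IsBkStruct s m k n (unwrap (n + 2) P) := by
  have h1 := h.outer_mem (by omega)
  have h2k := h.two_mul_le (by omega)
  obtain ⟨hP, hinit, hexcl, hstack⟩ := h
  have hQ := secBase_unwrap hP h1
  refine ⟨hQ, fun a ha => mem_unwrap.2 ⟨?_, by simp⟩, fun hmem => hexcl ?_, ?_⟩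
  · convert hinit (a + 1) (by omega) using 2 <;> omega
  · rw [show n + 2 - (k + 1) = n - k + 1 by omega]
    exact (mem_unwrap.1 hmem).1
  · intro q hq hq1 hnot
    obtain ⟨hqP, hqne⟩ := mem_unwrap.1 hq
    have hb := hQ.1 q hq
    have hnotP : (q.1 + 1 - 1, q.2 + 1 + 1) ∉ P := by
      intro hmem
      rw [Nat.add_sub_cancel] at hmem
      by_cases hq1' : q.1 = 1
      · have := hP.2.1 _ hmem _ h1
        refine hq1 (Prod.ext hq1' ?_)
        by_contra hne
        exact (this (by simp only [ne_eq, Prod.mk_inj]; omega)).1 hq1'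
      · refine hnot (mem_unwrap.2 ⟨?_, by simp only [ne_eq, Prod.mk_inj]; omega⟩)
        convert hmem using 2; omega
    obtain ⟨t, hst, ht⟩ := hstack _ hqP hqne hnotP
    refine ⟨t, hst, fun a ha => mem_unwrap.2 ⟨?_, by simp only [ne_eq, Prod.mk_inj]; omega⟩⟩
    have := hP.1 _ (ht a ha)
    simp only at this
    convert ht a ha using 2 <;> omega

lemma wrap_unwrap (hb : ∀ p ∈ P, 1 ≤ p.1 ∧ p.1 < p.2) (h1 : (1, N) ∈ P) :
    wrap N (unwrap N P) = P := by
  ext p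
  rw [mem_wrap]
  constructor
  · rintro (rfl | ⟨q, hq, rfl⟩)
    · exact h1
    · exact (mem_unwrap.1 hq).1
  · intro hp
    refine or_iff_not_imp_left.2 fun hne => ?_
    have := hb p hp
    have hp' : (p.1 - 1 + 1, p.2 - 1 + 1) = p := Prod.ext (by omega) (by omega)
    exact ⟨(p.1 - 1, p.2 - 1), mem_unwrap.2 (by rw [hp']; exact ⟨hp, hne⟩), hp'⟩

lemma unwrap_wrap (hb : ∀ q ∈ Q, 1 ≤ q.1) : unwrap N (wrap N Q) = Q := by
  ext q
  rw [mem_unwrap]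
  by_cases hq : (q.1 + 1, q.2 + 1) = (1, N)
  · simp only [hq, ne_eq, not_true_eq_false, and_false, false_iff]
    exact fun hmem => by have := hb q hmem; simp only [Prod.mk_inj] at hq; omega
  · rw [shift_mem_wrap_iff hq]
    simp [hq]

noncomputable def bkFinset (s m k n : ℕ) : Finset (Finset (ℕ × ℕ)) :=
  (Finset.range (n + 1) ×ˢ Finset.range (n + 1)).powerset.filter (IsBkStruct s m k n)

lemma SecBase.subset_range_product (h : SecBase m n P) :
    P ⊆ Finset.range (n + 1) ×ˢ Finset.range (n + 1) := fun p hp => by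
  have := h.1 p hp
  simp only [Finset.mem_product, Finset.mem_range]
  omega

lemma mem_bkFinset : P ∈ bkFinset s m k n ↔ IsBkStruct s m k n P := by
  rw [bkFinset, Finset.mem_filter, Finset.mem_powerset]
  exact ⟨And.right, fun h => ⟨h.1.subset_range_product, h⟩⟩

lemma mem_secFinset : P ∈ secFinset s m n ↔ IsSecStruct s m n P := by
  rw [secFinset, Finset.mem_filter, Finset.mem_powerset]
  exact ⟨And.right, fun h => ⟨h.1.subset_range_product, h⟩⟩

lemma card_bkFinset_succ (hk : 1 ≤ k) :
    (bkFinset s m (k + 1) (n + 2)).card = (bkFinset s m k n).card := by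
  refine Finset.card_nbij' (unwrap (n + 2)) (wrap (n + 2)) (fun P hP => ?_) (fun Q hQ => ?_)
    (fun P hP => ?_) (fun Q hQ => ?_)
  · exact mem_bkFinset.2 (isBkStruct_unwrap (mem_bkFinset.1 hP) hk)
  · exact mem_bkFinset.2 (isBkStruct_wrap (mem_bkFinset.1 hQ) hk)
  · have h := mem_bkFinset.1 hP
    exact wrap_unwrap (fun p hp => by have := h.1.1 p hp; omega) (h.outer_mem (by omega))
  · have h := mem_bkFinset.1 hQ
    exact unwrap_wrap fun q hq => (h.1.1 q hq).1

lemma IsBkStruct.unique {k' : ℕ} (h : IsBkStruct s m k n P) (h' : IsBkStruct s m k' n P) :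
    k = k' := by
  by_contra hne
  rcases Nat.lt_or_gt_of_ne hne with hlt | hlt
  · exact h.2.2.1 (by simpa [add_comm] using h'.2.1 k hlt)
  · exact h'.2.2.1 (by simpa [add_comm] using h.2.1 k' hlt)

lemma IsBkStruct.isSecStruct (h : IsBkStruct s m k n P) (hsk : s ≤ k) : IsSecStruct s m n P := by
  refine ⟨h.1, fun p hp hnot => ?_⟩
  by_cases hp1 : p = (1, n)
  · exact ⟨k, hsk, fun a ha => hp1 ▸ h.2.1 a ha⟩
  · exact h.2.2.2 p hp hp1 hnot

lemma IsSecStruct.exists_isBkStruct (h : IsSecStruct s m n P) (h1 : (1, n) ∈ P) :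
    ∃ k ∈ Finset.Icc s n, IsBkStruct s m k n P := by
  have hn : (n + 1, n - n) ∉ P := fun hmem => by have := h.1.1 _ hmem; omega
  have hex : ∃ k, (k + 1, n - k) ∉ P := ⟨n, hn⟩
  have hinit : ∀ a < Nat.find hex, (1 + a, n - a) ∈ P := fun a ha => by
    simpa [add_comm] using Nat.find_min hex ha
  obtain ⟨t, hst, ht⟩ := h.2 _ h1 fun hmem => by have := h.1.1 _ hmem; omega
  have hts : t ≤ Nat.find hex := by
    by_contra! hlt
    exact Nat.find_spec hex (by simpa [add_comm] using ht _ hlt)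
  refine ⟨Nat.find hex, Finset.mem_Icc.2 ⟨hst.trans hts, Nat.find_min' hex hn⟩,
    h.1, hinit, Nat.find_spec hex, fun p hp _ hnot => h.2 p hp hnot⟩

lemma secCountB_eq_sum_card_bkFinset (hs : 1 ≤ s) :
    secCountB s m n = ∑ k ∈ Finset.Icc s n, (bkFinset s m k n).card := by
  have hdisj : (Finset.Icc s n : Set ℕ).PairwiseDisjoint (bkFinset s m · n) :=
    fun k _ k' _ hne => Finset.disjoint_left.2 fun _ hP hP' =>
      hne ((mem_bkFinset.1 hP).unique (mem_bkFinset.1 hP'))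
  rw [secCountB, ← Finset.card_biUnion hdisj]
  congr 1
  ext P
  simp only [Finset.mem_filter, mem_secFinset, Finset.mem_biUnion, mem_bkFinset]
  constructor
  · exact fun ⟨h, h1⟩ => h.exists_isBkStruct h1
  · rintro ⟨k, hk, h⟩
    have hsk := (Finset.mem_Icc.1 hk).1
    exact ⟨h.isSecStruct hsk, h.outer_mem (hs.trans hsk)⟩

lemma coeff_Bkgf : coeff n (Bkgf s m k) = (bkFinset s m k n).card := coeff_mk _ _

lemma coeff_Bkgf_eq_zero (hk : 1 ≤ k) (hn : n < 2 * k) : coeff n (Bkgf s m k) = 0 := by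
  rw [coeff_Bkgf, Nat.cast_eq_zero, Finset.card_eq_zero, Finset.eq_empty_iff_forall_notMem]
  exact fun P hP => by have := (mem_bkFinset.1 hP).two_mul_le hk; omega

lemma coeff_Bkgf_succ (hk : 1 ≤ k) : coeff (n + 2) (Bkgf s m (k + 1)) = coeff n (Bkgf s m k) := by
  rw [coeff_Bkgf, coeff_Bkgf, card_bkFinset_succ hk]

lemma Bkgf_succ (hk : 1 ≤ k) : Bkgf s m (k + 1) = X ^ 2 * Bkgf s m k := by
  ext n
  rw [coeff_X_pow_mul']
  split_ifs with hn
  · obtain ⟨n, rfl⟩ := Nat.exists_eq_add_of_le' hn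
    rw [coeff_Bkgf_succ hk, Nat.add_sub_cancel]
  · exact coeff_Bkgf_eq_zero (by omega) (by omega)

lemma Bkgf_add (hk : 1 ≤ k) (i : ℕ) : Bkgf s m (k + i) = X ^ (2 * i) * Bkgf s m k := by
  induction i with
  | zero => simp
  | succ i ih => rw [← add_assoc, Bkgf_succ (by omega), ih]; ring

lemma coeff_Bgf_eq_sum (hs : 1 ≤ s) :
    coeff n (Bgf s m) = ∑ k ∈ Finset.Icc s n, coeff n (Bkgf s m k) := by
  simp only [Bgf, coeff_mk, secCountB_eq_sum_card_bkFinset hs, Nat.cast_sum, coeff_Bkgf]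

lemma coeff_Bgf_eq_sum_range (hs : 1 ≤ s) {M : ℕ} (hM : n ≤ M) :
    coeff n (Bgf s m) = ∑ i ∈ Finset.range M, coeff n (Bkgf s m (s + i)) := by
  rw [coeff_Bgf_eq_sum hs, ← Finset.Ico_add_one_right_eq_Icc, Finset.sum_Ico_eq_sum_range]
  refine Finset.sum_subset (Finset.range_subset_range.2 (by omega)) fun i _ hi => ?_
  rw [Finset.mem_range] at hi
  exact coeff_Bkgf_eq_zero (by omega) (by omega)

lemma Bgf_eq_Bkgf_add (hs : 1 ≤ s) : Bgf s m = Bkgf s m s + X ^ 2 * Bgf s m := by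
  ext n
  rw [map_add, coeff_X_pow_mul']
  split_ifs with hn
  · obtain ⟨n, rfl⟩ := Nat.exists_eq_add_of_le' hn
    rw [coeff_Bgf_eq_sum_range hs (M := n + 2 + 1) (by omega), Finset.sum_range_succ',
      Nat.add_sub_cancel, coeff_Bgf_eq_sum_range hs (M := n + 2) (by omega), add_zero, add_comm]
    congr 1
    exact Finset.sum_congr rfl fun i _ => coeff_Bkgf_succ (k := s + i) (by omega)
  · rw [coeff_Bgf_eq_sum hs, coeff_Bkgf_eq_zero hs (by omega), Finset.sum_eq_zero, add_zero]
    exact fun k hk => coeff_Bkgf_eq_zero (by simp at hk; omega) (by simp at hk; omega)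

end

theorem stmt12_general (s m : ℕ) (hs : 1 ≤ s) :
    (∀ k : ℕ, 1 ≤ k →
      PowerSeries.X ^ (2 * s) * Bkgf s m k
        = PowerSeries.X ^ (2 * k) * (1 - PowerSeries.X ^ 2) * Bgf s m) ∧
    (∀ k : ℕ, s ≤ k →
      Bkgf s m k
        = PowerSeries.X ^ (2 * k - 2 * s) * (1 - PowerSeries.X ^ 2) * Bgf s m) ∧
    Bgf s m = PowerSeries.mk
      (fun n => ∑ k ∈ Finset.Icc s n, PowerSeries.coeff (R := ℚ) n (Bkgf s m k)) := by
  have hB : (1 - X ^ 2) * Bgf s m = Bkgf s m s := by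
    rw [sub_mul, one_mul, sub_eq_iff_eq_add]
    exact Bgf_eq_Bkgf_add hs
  refine ⟨fun k hk => ?_, fun k hk => ?_, ?_⟩
  · obtain ⟨i, rfl⟩ := Nat.exists_eq_add_of_le hk
    obtain ⟨j, rfl⟩ := Nat.exists_eq_add_of_le hs
    rw [mul_assoc, hB, Bkgf_add le_rfl, Bkgf_add le_rfl]
    ring
  · obtain ⟨i, rfl⟩ := Nat.exists_eq_add_of_le hk
    rw [mul_assoc, hB, Bkgf_add hs, mul_add, Nat.add_sub_cancel_left]
  · ext n
    rw [coeff_mk, coeff_Bgf_eq_sum hs]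

theorem stmt12 (s m : ℕ) (hs : 1 ≤ s) (hm : 1 ≤ m) :
    (∀ k : ℕ, 1 ≤ k →
      PowerSeries.X ^ (2 * s) * Bkgf s m k
        = PowerSeries.X ^ (2 * k) * (1 - PowerSeries.X ^ 2) * Bgf s m) ∧
    (∀ k : ℕ, s ≤ k →
      Bkgf s m k
        = PowerSeries.X ^ (2 * k - 2 * s) * (1 - PowerSeries.X ^ 2) * Bgf s m) ∧
    Bgf s m = PowerSeries.mk
      (fun n => ∑ k ∈ Finset.Icc s n, PowerSeries.coeff (R := ℚ) n (Bkgf s m k)) :=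
  stmt12_general s m hs
end
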